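/- For every natural number k and every ε > 0 there exists N such that every tournament T on n ≥ N vertices satisfies p(Tr_k, T) ≥ k!/2^{k(k−1)/2} − ε. Equivalently, for every sequence (T_j) of tournaments with |V(T_j)| → ∞, liminf_{j→∞} p(Tr_k, T_j) ≥ k!/2^{k(k−1)/2}. -/

import Mathlib

/-- A tournament on `n` vertices: an irreflexive relation such that for every
pair of distinct vertices exactly one direction holds. -/
structure Tournament (n : ℕ) where
  rel : Fin n → Fin n → Bool
  irrefl : ∀ v, rel v v = false
  total : ∀ u v, u ≠ v → rel u v = !rel v u

/-- The transitive tournament `Tr_k`. -/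
def Tr (k : ℕ) : Tournament k where
  rel i j := decide (i < j)
  irrefl v := by simp
  total u v h := by
    rcases h.lt_or_gt with h' | h'
    · simp [h', h'.not_gt]
    · simp [h', h'.not_gt]

/-- The cyclic triangle. -/
def C3 : Tournament 3 where
  rel := ![![false, true, false], ![false, false, true], ![true, false, false]]
  irrefl := by decide
  total := by decide

/-- `W₄`: the non-transitive tournament on 4 vertices with a "winner". -/
def W4 : Tournament 4 where
  rel := ![![false, true, true, true], ![false, false, true, false],
           ![false, false, false, true], ![false, true, false, false]]
  irrefl := by decide
  total := by decide

/-- `L₄`: the non-transitive tournament on 4 vertices with a "loser". -/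
def L4 : Tournament 4 where
  rel := ![![false, true, false, true], ![false, false, true, true],
           ![true, false, false, true], ![false, false, false, false]]
  irrefl := by decide
  total := by decide

/-- `R₄`: the tournament on 4 vertices with out-degree sequence (1,1,2,2). -/
def R4 : Tournament 4 where
  rel := ![![false, true, true, false], ![false, false, true, true],
           ![false, false, false, true], ![true, false, false, false]]
  irrefl := by decide
  total := by decide

/-- Two tournaments on the same number of vertices are isomorphic if some
permutation of the vertices carries one arc relation to the other. -/
def Isomorphic {k : ℕ} (S T : Tournament k) : Prop :=
  ∃ e : Equiv.Perm (Fin k), ∀ i j, S.rel i j = T.rel (e i) (e j)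

/-- The subtournament of `T` induced on the subset `A` is isomorphic to `S`. -/
def IsoOn {k n : ℕ} (S : Tournament k) (T : Tournament n) (A : Finset (Fin n)) : Prop :=
  ∃ f : Fin k → Fin n, Function.Injective f ∧ Finset.univ.image f = A ∧
    ∀ i j, S.rel i j = T.rel (f i) (f j)

open scoped Classical in
/-- The number of `k`-element subsets of the vertex set of `T` whose induced
subtournament is isomorphic to `S` (where `S` has `k` vertices). -/
noncomputable def copyCount {k n : ℕ} (S : Tournament k) (T : Tournament n) : ℕ :=
  ((Finset.powersetCard k (Finset.univ : Finset (Fin n))).filter (IsoOn S T)).card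

/-- The (unlabelled) density `p(S, T)`. -/
noncomputable def density {k n : ℕ} (S : Tournament k) (T : Tournament n) : ℝ :=
  (copyCount S T : ℝ) / (n.choose k : ℝ)

/-- The number of automorphisms of a tournament. -/
def autCount {k : ℕ} (S : Tournament k) : ℕ :=
  (Finset.univ.filter
    (fun e : Equiv.Perm (Fin k) => ∀ i j, S.rel i j = S.rel (e i) (e j))).card

/-- A sequence of tournaments with growing vertex sets is quasi-random if every
fixed tournament `S` on `k` vertices appears with density tending to
`k! / (|Aut S| * 2^(k(k-1)/2))`. -/
def QuasiRandom {nn : ℕ → ℕ} (T : ∀ j, Tournament (nn j)) : Prop :=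
  ∀ (k : ℕ) (S : Tournament k),
    Filter.Tendsto (fun j => density S (T j)) Filter.atTop
      (nhds ((k.factorial : ℝ) / ((autCount S : ℝ) * 2 ^ (k * (k - 1) / 2))))

/-- `D(u,v) = #{w : u→w ∧ w→v}`. -/
def Dcount {n : ℕ} (T : Tournament n) (u v : Fin n) : ℕ :=
  (Finset.univ.filter (fun w => T.rel u w ∧ T.rel w v)).card

/-- `C(u,v) = #{w : v→w ∧ w→u}`. -/
def Ccount {n : ℕ} (T : Tournament n) (u v : Fin n) : ℕ :=
  (Finset.univ.filter (fun w => T.rel v w ∧ T.rel w u)).card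

/-- `I(u,v) = #{w : w→u ∧ w→v}`. -/
def Icount {n : ℕ} (T : Tournament n) (u v : Fin n) : ℕ :=
  (Finset.univ.filter (fun w => T.rel w u ∧ T.rel w v)).card

/-- `O(u,v) = #{w : u→w ∧ v→w}`. -/
def Ocount {n : ℕ} (T : Tournament n) (u v : Fin n) : ℕ :=
  (Finset.univ.filter (fun w => T.rel u w ∧ T.rel v w)).card

/-- The subset `A` induces a transitive subtournament of `T`. -/
def IsTransOn {n : ℕ} (T : Tournament n) (A : Finset (Fin n)) : Prop :=
  ∀ u ∈ A, ∀ v ∈ A, ∀ w ∈ A, T.rel u v → T.rel v w → T.rel u w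

open scoped Classical in
/-- `tr_m(T)`: the number of `m`-element subsets of the vertex set of `T`
inducing a transitive subtournament. -/
noncomputable def trCount (m : ℕ) {n : ℕ} (T : Tournament n) : ℕ :=
  ((Finset.powersetCard m (Finset.univ : Finset (Fin n))).filter (IsTransOn T)).card

/-- The subtournament of `T` induced on a subset `A` of its vertices. -/
noncomputable def induce {n : ℕ} (T : Tournament n) (A : Finset (Fin n)) :
    Tournament A.card where
  rel i j := T.rel (A.orderIsoOfFin rfl i) (A.orderIsoOfFin rfl j)
  irrefl i := T.irrefl _
  total i j h := T.total _ _ (fun hc => h ((A.orderIsoOfFin rfl).injective (Subtype.ext hc)))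

/-- The out-neighbourhood `N⁺(u)` of a vertex. -/
def outSet {n : ℕ} (T : Tournament n) (u : Fin n) : Finset (Fin n) :=
  Finset.univ.filter (fun w => T.rel u w)

/-- The out-degree of a vertex. -/
def outDeg {n : ℕ} (T : Tournament n) (v : Fin n) : ℕ :=
  (Finset.univ.filter (fun w => T.rel v w)).card

/-- The multiset of out-degrees of a tournament. -/
def outDegs {n : ℕ} (T : Tournament n) : Multiset ℕ :=
  Finset.univ.val.map (outDeg T)

/-- The arc relation of `T` is transitive. -/
def IsTransitiveT {k : ℕ} (S : Tournament k) : Prop :=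
  ∀ u v w, S.rel u v → S.rel v w → S.rel u w

/-!
A transitive `(k+1)`-set is a vertex together with a transitive `k`-set in its out-neighbourhood,
so `tr_{k+1}(W) = ∑_{v ∈ W} tr_k(W ∩ N⁺(v))`. The out-degrees inside `W` sum to
`|W|(|W|-1)/2`, so the power-mean inequality and induction on `k` give
`2^(k choose 2) · tr_k(W) ≥ max(|W| - 2^k + 1, 0)^k`. Dividing by `binom(n, k) ≤ n^k / k!` and
applying Bernoulli's inequality gives `p(Tr_k, T) ≥ k!/2^(k choose 2) · (1 - k 2^k / n)`.
-/

open Finset Filter Topology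

lemma card_mul_pow_le_sum_pow {ι : Type*} {s : Finset ι} {f : ι → ℝ} {a : ℝ}
    (hf : ∀ i ∈ s, 0 ≤ f i) (ha : 0 ≤ a) (hsum : #s * a ≤ ∑ i ∈ s, f i) (k : ℕ) :
    #s * a ^ k ≤ ∑ i ∈ s, f i ^ k := by
  rcases s.eq_empty_or_nonempty with rfl | hs
  · simp
  have hcard : (0 : ℝ) < #s := by exact_mod_cast hs.card_pos
  have hw : ∑ _i ∈ s, (#s : ℝ)⁻¹ = 1 := by
    rw [sum_const, nsmul_eq_mul, mul_inv_cancel₀ hcard.ne']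
  have hmean := Real.pow_arith_mean_le_arith_mean_pow s (fun _ => (#s : ℝ)⁻¹) f
    (fun _ _ => by positivity) hw hf k
  rw [← mul_sum, ← mul_sum] at hmean
  have ha' : a ≤ (#s : ℝ)⁻¹ * ∑ i ∈ s, f i := by rwa [le_inv_mul_iff₀ hcard]
  calc #s * a ^ k ≤ #s * ((#s : ℝ)⁻¹ * ∑ i ∈ s, f i) ^ k := by gcongr
    _ ≤ #s * ((#s : ℝ)⁻¹ * ∑ i ∈ s, f i ^ k) := by gcongr
    _ = ∑ i ∈ s, f i ^ k := by rw [← mul_assoc, mul_inv_cancel₀ hcard.ne', one_mul]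

namespace Tournament

variable {n : ℕ} (T : Tournament n)

lemma rel_asymm {u v : Fin n} (h : T.rel u v) : T.rel v u = false := by
  rcases eq_or_ne u v with rfl | hne
  · exact T.irrefl u
  · rw [T.total v u hne.symm, h]; rfl

lemma rel_of_not_rel {u v : Fin n} (hne : u ≠ v) (h : ¬T.rel u v) : T.rel v u := by
  rw [T.total v u hne.symm]; simpa using h

lemma mem_outSet {u v : Fin n} : v ∈ outSet T u ↔ T.rel u v := by
  simp [outSet]

lemma sum_card_inter_outSet (W : Finset (Fin n)) :
    ∑ v ∈ W, (#(W ∩ outSet T v) : ℝ) = #W * (#W - 1) / 2 := by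
  have hdeg : ∀ v, (#(W ∩ outSet T v) : ℝ) = ∑ u ∈ W, if T.rel v u then 1 else 0 := by
    intro v
    rw [← natCast_card_filter]
    congr 2; ext u; simp [mem_outSet]
  have hpair : ∀ u v, ((if T.rel v u then 1 else 0) + (if T.rel u v then 1 else 0) : ℝ) =
      1 - if u = v then 1 else 0 := by
    intro u v
    rcases eq_or_ne u v with rfl | hne
    · simp [T.irrefl]
    · by_cases h : T.rel u v
      · simp [hne, h, T.rel_asymm h]
      · simp [hne, h, T.rel_of_not_rel hne h]
  have htwice : 2 * ∑ v ∈ W, (#(W ∩ outSet T v) : ℝ) = #W * (#W - 1) := by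
    calc 2 * ∑ v ∈ W, (#(W ∩ outSet T v) : ℝ)
        = ∑ v ∈ W, ∑ u ∈ W,
            (((if T.rel v u then 1 else 0) + (if T.rel u v then 1 else 0)) : ℝ) := by
          simp only [hdeg, sum_add_distrib]
          rw [sum_comm (f := fun v u => if T.rel u v then (1 : ℝ) else 0)]; ring
      _ = ∑ v ∈ W, ((#W : ℝ) - 1) := by
          refine sum_congr rfl fun v hv => ?_
          simp only [hpair, sum_sub_distrib, sum_ite_eq', hv, if_true, sum_const, nsmul_one]
      _ = #W * (#W - 1) := by rw [sum_const, nsmul_eq_mul]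
  linarith

lemma _root_.IsTransOn.mono {T : Tournament n} {A B : Finset (Fin n)} (hA : IsTransOn T A)
    (hBA : B ⊆ A) : IsTransOn T B :=
  fun u hu v hv w hw => hA u (hBA hu) v (hBA hv) w (hBA hw)

lemma notMem_of_forall_rel {v : Fin n} {B : Finset (Fin n)} (hvB : ∀ u ∈ B, T.rel v u) :
    v ∉ B :=
  fun h => by simpa [T.irrefl] using hvB v h

lemma isTransOn_insert {v : Fin n} {B : Finset (Fin n)} (hB : IsTransOn T B)
    (hvB : ∀ u ∈ B, T.rel v u) : IsTransOn T (insert v B) := by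
  have hnot : ∀ u ∈ B, ¬T.rel u v := fun u hu => by simp [T.rel_asymm (hvB u hu)]
  intro a ha b hb c hc hab hbc
  rcases mem_insert.1 ha with rfl | ha <;> rcases mem_insert.1 hb with rfl | hb <;>
    rcases mem_insert.1 hc with rfl | hc
  all_goals first
    | exact hvB _ ‹_›
    | exact absurd hab (hnot _ ‹_›)
    | exact absurd hbc (hnot _ ‹_›)
    | simp [T.irrefl] at hab
    | exact hB a ha b hb c hc hab hbc

lemma _root_.IsTransOn.exists_source {T : Tournament n} {A : Finset (Fin n)}
    (hA : IsTransOn T A) (hne : A.Nonempty) :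
    ∃ v ∈ A, ∀ u ∈ A, u ≠ v → T.rel v u := by
  -- a vertex of maximum out-degree inside `A` beats every other vertex of `A`
  obtain ⟨v, hv, hmax⟩ := A.exists_max_image (fun v => #(A.filter (T.rel v ·))) hne
  refine ⟨v, hv, fun u hu huv => ?_⟩
  by_contra h
  have huv : T.rel u v := T.rel_of_not_rel huv.symm h
  have hsub : A.filter (T.rel v ·) ⊂ A.filter (T.rel u ·) := by
    rw [ssubset_iff_of_subset]
    · exact ⟨v, by simp [hv, huv], by simp [T.irrefl]⟩
    · intro w hw
      simp only [mem_filter] at hw ⊢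
      exact ⟨hw.1, hA u hu v hv w hw.1 huv hw.2⟩
  exact (card_lt_card hsub).not_ge (hmax u hu)

lemma eq_of_insert_eq_insert {v v' : Fin n} {B B' : Finset (Fin n)}
    (hB : ∀ u ∈ B, T.rel v u) (hB' : ∀ u ∈ B', T.rel v' u) (h : insert v B = insert v' B') :
    v = v' := by
  by_contra hne
  have hv : v ∈ B' := (mem_insert.1 (h ▸ mem_insert_self v B)).resolve_left hne
  have hv' : v' ∈ B :=
    (mem_insert.1 (h.symm ▸ mem_insert_self v' B')).resolve_left (Ne.symm hne)
  simpa [T.rel_asymm (hB v' hv')] using hB' v hv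

lemma _root_.IsTransOn.exists_enum {T : Tournament n} {k : ℕ} {A : Finset (Fin n)}
    (hA : IsTransOn T A) (hk : #A = k) :
    ∃ f : Fin k → Fin n, Function.Injective f ∧ univ.image f = A ∧
      ∀ i j, i < j → T.rel (f i) (f j) := by
  induction k generalizing A with
  | zero => exact ⟨Fin.elim0, fun i => i.elim0, by simp_all, fun i => i.elim0⟩
  | succ k ih =>
    obtain ⟨v, hv, hsrc⟩ := hA.exists_source (card_pos.1 (by omega))
    obtain ⟨f, hinj, himg, hf⟩ :=
      ih (hA.mono (erase_subset v A)) (by rw [card_erase_of_mem hv, hk]; rfl)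
    have hfA : ∀ i, f i ∈ A.erase v := fun i => himg ▸ mem_image_of_mem f (mem_univ i)
    refine ⟨Fin.cons v f, Fin.cons_injective_iff.2 ⟨?_, hinj⟩, ?_, ?_⟩
    · rintro ⟨i, hi⟩
      exact ne_of_mem_erase (hfA i) hi
    · apply coe_injective
      rw [coe_image, coe_univ, Set.image_univ, Fin.range_cons, ← Set.image_univ, ← coe_univ,
        ← coe_image, himg, ← coe_insert, insert_erase hv]
    · intro i j hij
      induction j using Fin.cases with
      | zero => exact absurd hij (Fin.not_lt_zero i)
      | succ j =>
        induction i using Fin.cases with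
        | zero => exact hsrc _ (mem_of_mem_erase (hfA j)) (ne_of_mem_erase (hfA j))
        | succ i => exact hf i j (Fin.succ_lt_succ_iff.1 hij)

lemma _root_.IsTransOn.isoOn_tr {T : Tournament n} {k : ℕ} {A : Finset (Fin n)}
    (hA : IsTransOn T A) (hk : #A = k) : IsoOn (Tr k) T A := by
  obtain ⟨f, hinj, himg, hf⟩ := hA.exists_enum hk
  refine ⟨f, hinj, himg, fun i j => ?_⟩
  change decide (i < j) = T.rel (f i) (f j)
  rcases lt_trichotomy i j with hij | rfl | hji
  · simp [hij, hf i j hij]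
  · simp [T.irrefl]
  · simp [hji.not_gt, T.rel_asymm (hf j i hji)]

open scoped Classical in
noncomputable def trCountOn (k : ℕ) (W : Finset (Fin n)) : ℕ :=
  #((powersetCard k W).filter (IsTransOn T))

lemma trCountOn_zero (W : Finset (Fin n)) : T.trCountOn 0 W = 1 := by
  rw [trCountOn, powersetCard_zero, filter_singleton, if_pos (by simp [IsTransOn]), card_singleton]

lemma trCountOn_succ (k : ℕ) (W : Finset (Fin n)) :
    T.trCountOn (k + 1) W = ∑ v ∈ W, T.trCountOn k (W ∩ outSet T v) := by
  classical
  simp only [trCountOn]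
  rw [← card_sigma]
  symm
  refine card_bij (fun p _ => insert p.1 p.2) ?_ ?_ ?_
  · rintro ⟨v, B⟩ hp
    simp only [mem_sigma, mem_filter, mem_powersetCard, subset_inter_iff] at hp ⊢
    obtain ⟨hv, ⟨⟨hBW, hBv⟩, hcard⟩, hB⟩ := hp
    have hvB : ∀ u ∈ B, T.rel v u := fun u hu => (T.mem_outSet).1 (hBv hu)
    refine ⟨⟨insert_subset hv hBW, ?_⟩, T.isTransOn_insert hB hvB⟩
    rw [card_insert_of_notMem (T.notMem_of_forall_rel hvB), hcard]
  · rintro ⟨v, B⟩ hp ⟨v', B'⟩ hp' h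
    simp only [mem_sigma, mem_filter, mem_powersetCard, subset_inter_iff] at hp hp'
    have hvB : ∀ u ∈ B, T.rel v u := fun u hu => (T.mem_outSet).1 (hp.2.1.1.2 hu)
    have hvB' : ∀ u ∈ B', T.rel v' u := fun u hu => (T.mem_outSet).1 (hp'.2.1.1.2 hu)
    obtain rfl := T.eq_of_insert_eq_insert hvB hvB' h
    rw [← erase_insert (T.notMem_of_forall_rel hvB), h,
      erase_insert (T.notMem_of_forall_rel hvB')]
  · intro A hA
    simp only [mem_filter, mem_powersetCard] at hA
    obtain ⟨⟨hAW, hcard⟩, hAtr⟩ := hA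
    obtain ⟨v, hv, hsrc⟩ := hAtr.exists_source (card_pos.1 (by omega))
    refine ⟨⟨v, A.erase v⟩, ?_, insert_erase hv⟩
    simp only [mem_sigma, mem_filter, mem_powersetCard, subset_inter_iff]
    refine ⟨hAW hv, ⟨⟨(erase_subset v A).trans hAW, fun u hu => ?_⟩, ?_⟩, ?_⟩
    · exact (T.mem_outSet).2 (hsrc u (mem_of_mem_erase hu) (ne_of_mem_erase hu))
    · rw [card_erase_of_mem hv, hcard]; rfl
    · exact hAtr.mono (erase_subset v A)

theorem pow_le_two_pow_choose_mul_trCountOn (k : ℕ) (W : Finset (Fin n)) :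
    (((#W : ℝ) - (2 ^ k - 1)) ⊔ 0) ^ k ≤ 2 ^ k.choose 2 * T.trCountOn k W := by
  induction k generalizing W with
  | zero => simp [trCountOn_zero]
  | succ k ih =>
    set X : ℝ := #W - (2 ^ (k + 1) - 1)
    rcases le_or_gt X 0 with hX | hX
    · rw [max_eq_right hX, zero_pow k.succ_ne_zero]; positivity
    rw [max_eq_left hX.le]
    set f : Fin n → ℝ := fun v => ((#(W ∩ outSet T v) : ℝ) - (2 ^ k - 1)) ⊔ 0
    have hsum : #W * (X / 2) ≤ ∑ v ∈ W, f v :=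
      calc #W * (X / 2) = ∑ v ∈ W, ((#(W ∩ outSet T v) : ℝ) - (2 ^ k - 1)) := by
            rw [sum_sub_distrib, T.sum_card_inter_outSet, sum_const, nsmul_eq_mul]
            simp only [X, pow_succ]; ring
        _ ≤ ∑ v ∈ W, f v := sum_le_sum fun _ _ => le_max_left _ _
    have hpow := card_mul_pow_le_sum_pow (fun v _ => le_max_right _ _) (by positivity) hsum k
    have hXW : X ≤ #W := by
      simp only [X]; linarith [one_le_pow₀ (M₀ := ℝ) (n := k + 1) one_le_two]
    calc X ^ (k + 1) = X ^ k * X := pow_succ X k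
      _ ≤ X ^ k * #W := by gcongr
      _ = 2 ^ k * (#W * (X / 2) ^ k) := by rw [div_pow]; field_simp
      _ ≤ 2 ^ k * ∑ v ∈ W, f v ^ k := by gcongr
      _ ≤ 2 ^ k * ∑ v ∈ W, 2 ^ k.choose 2 * (T.trCountOn k (W ∩ outSet T v) : ℝ) := by
          gcongr with v hv; exact ih _
      _ = 2 ^ (k + 1).choose 2 * T.trCountOn (k + 1) W := by
          rw [trCountOn_succ, Nat.choose_succ_succ', Nat.choose_one_right, pow_add, Nat.cast_sum,
            ← mul_sum]
          ring

lemma trCount_le_copyCount_tr (k : ℕ) : trCount k T ≤ copyCount (Tr k) T := by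
  classical
  refine card_le_card fun A hA => ?_
  simp only [mem_filter, mem_powersetCard] at hA ⊢
  exact ⟨hA.1, hA.2.isoOn_tr hA.1.2⟩

lemma density_le_one {k : ℕ} (S : Tournament k) : density S T ≤ 1 := by
  classical
  refine div_le_one_of_le₀ ?_ (Nat.cast_nonneg _)
  have h : copyCount S T ≤ #(powersetCard k (univ : Finset (Fin n))) := card_filter_le _ _
  rw [card_powersetCard, card_univ, Fintype.card_fin] at h
  exact_mod_cast h

theorem density_tr_ge (k : ℕ) (hn : 2 ^ k ≤ n) :
    (k.factorial : ℝ) / 2 ^ k.choose 2 * (1 - k * 2 ^ k / n) ≤ density (Tr k) T := by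
  have hn0 : (0 : ℝ) < n := by exact_mod_cast (Nat.two_pow_pos k).trans_le hn
  have hchoose : (0 : ℝ) < n.choose k :=
    by exact_mod_cast Nat.choose_pos (Nat.lt_two_pow_self.le.trans hn)
  have hc : (2 : ℝ) ^ k - 1 ≤ n := by
    have : (2 : ℝ) ^ k ≤ n := by exact_mod_cast hn
    linarith
  have hcount : ((n : ℝ) - (2 ^ k - 1)) ^ k ≤ 2 ^ k.choose 2 * copyCount (Tr k) T := by
    have h := T.pow_le_two_pow_choose_mul_trCountOn k univ
    rw [card_univ, Fintype.card_fin, max_eq_left (by linarith)] at h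
    exact h.trans (by gcongr; exact_mod_cast T.trCount_le_copyCount_tr k)
  have hbern : 1 - k * 2 ^ k / n ≤ (1 - (2 ^ k - 1) / (n : ℝ)) ^ k := by
    have h := one_add_mul_le_pow (a := -((2 ^ k - 1) / (n : ℝ)))
      (by linarith [div_le_one_of_le₀ hc hn0.le]) k
    have : (k : ℝ) * (2 ^ k - 1) / n ≤ k * 2 ^ k / n := by gcongr; linarith
    rw [← sub_eq_add_neg] at h
    linarith [mul_div_assoc (k : ℝ) (2 ^ k - 1) n]
  calc (k.factorial : ℝ) / 2 ^ k.choose 2 * (1 - k * 2 ^ k / n)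
      ≤ (k.factorial : ℝ) / 2 ^ k.choose 2 * (1 - (2 ^ k - 1) / (n : ℝ)) ^ k := by gcongr
    _ = ((n : ℝ) - (2 ^ k - 1)) ^ k / 2 ^ k.choose 2 / (n ^ k / (k.factorial : ℝ)) := by
        rw [one_sub_div hn0.ne', div_pow]
        field_simp
    _ ≤ copyCount (Tr k) T / (n ^ k / (k.factorial : ℝ)) := by
        gcongr; rwa [div_le_iff₀' (by positivity)]
    _ ≤ density (Tr k) T := by
        rw [density]; gcongr; exact Nat.choose_le_pow_div k n

end Tournament

theorem eventually_sub_le_density_tr (k : ℕ) {ε : ℝ} (hε : 0 < ε) :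
    ∀ᶠ n in atTop, ∀ T : Tournament n,
      (k.factorial : ℝ) / 2 ^ k.choose 2 - ε ≤ density (Tr k) T := by
  set c : ℝ := k.factorial / 2 ^ k.choose 2
  have hlim : Tendsto (fun n : ℕ => c * (1 - k * 2 ^ k / n)) atTop (𝓝 c) := by
    simpa using
      ((tendsto_const_div_atTop_nhds_zero_nat ((k : ℝ) * 2 ^ k)).const_sub 1).const_mul c
  filter_upwards [hlim (Ici_mem_nhds (sub_lt_self c hε)), eventually_ge_atTop (2 ^ k)]
    with n hbound hn T
  exact le_trans hbound (T.density_tr_ge k hn)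

/-- for every `k` and `ε > 0`, every sufficiently large tournament
satisfies `p(Tr_k, T) ≥ k!/2^(k(k-1)/2) - ε`; equivalently, for every sequence of
tournaments with `|V(T_j)| → ∞`, `liminf p(Tr_k, T_j) ≥ k!/2^(k(k-1)/2)`. -/
theorem transitive_density_lower_bound (k : ℕ) :
    (∀ ε : ℝ, 0 < ε → ∃ N : ℕ, ∀ n : ℕ, N ≤ n → ∀ T : Tournament n,
      (k.factorial : ℝ) / 2 ^ (k * (k - 1) / 2) - ε ≤ density (Tr k) T) ∧
    (∀ (nn : ℕ → ℕ) (T : ∀ j, Tournament (nn j)),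
      Filter.Tendsto nn Filter.atTop Filter.atTop →
      (k.factorial : ℝ) / 2 ^ (k * (k - 1) / 2) ≤
        Filter.liminf (fun j => density (Tr k) (T j)) Filter.atTop) := by
  rw [← Nat.choose_two_right]
  refine ⟨fun ε hε => eventually_atTop.1 (eventually_sub_le_density_tr k hε), ?_⟩
  intro nn T hnn
  refine le_of_forall_sub_le fun ε hε => le_liminf_of_le ?_ ?_
  · exact isCoboundedUnder_ge_of_le atTop (x := 1) fun j => (T j).density_le_one (Tr k)
  · exact (hnn.eventually (eventually_sub_le_density_tr k hε)).mono fun j hj => hj (T j)
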